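/- arXiv:1908.07806 — 3 statements merged into one kernel-verified Lean document; each statement's English description precedes it below -/
import Mathlib

section
/- Let Ω be a bounded open subset of ℝ^N, s ∈ (0,1), and A an N-function. Then there exists a positive constant μ such that ‖u‖_A ≤ μ·[u]_{s,A} for every u ∈ W^s_0L_A(Ω), i.e. for every u ∈ W^sL_A(ℝ^N) with u = 0 almost everywhere in ℝ^N∖Ω; here ‖·‖_A is the Luxemburg norm over ℝ^N and [·]_{s,A} is the Gagliardo seminorm over ℝ^N × ℝ^N. -/
open MeasureTheory Filter Set
open scoped ENNReal NNReal RealInnerProductSpace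

noncomputable section

/-- An N-function: continuous, convex on `[0,∞)`, positive on `(0,∞)`,
`A t / t → 0` as `t → 0⁺`, `A t / t → ∞` as `t → ∞`, extended evenly to `ℝ`. -/
structure IsNFunction (A : ℝ → ℝ) : Prop where
  continuous : Continuous A
  convexOn : ConvexOn ℝ (Set.Ici 0) A
  pos : ∀ t > (0:ℝ), 0 < A t
  tendsto_zero : Tendsto (fun t => A t / t) (nhdsWithin 0 (Set.Ioi 0)) (nhds 0)
  tendsto_top : Tendsto (fun t => A t / t) atTop atTop
  even : ∀ t, A (-t) = A t

/-- An N-function together with its right-continuous density `a`,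
so that `A t = ∫₀ᵗ a(s) ds`. -/
structure IsNFunctionDeriv (A a : ℝ → ℝ) : Prop where
  toIsNFunction : IsNFunction A
  eq_integral : ∀ t, 0 ≤ t → A t = ∫ s in (0:ℝ)..t, a s
  monotone : MonotoneOn a (Set.Ici 0)
  rightCont : ∀ t, 0 ≤ t → ContinuousWithinAt a (Set.Ici t) t
  zero : a 0 = 0
  pos : ∀ t > (0:ℝ), 0 < a t
  tendsto_top : Tendsto a atTop atTop

/-- The Luxemburg norm of `u` on `Ω`. -/
def luxNorm {N : ℕ} (A : ℝ → ℝ) (Ω : Set (EuclideanSpace ℝ (Fin N)))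
    (u : EuclideanSpace ℝ (Fin N) → ℝ) : ℝ :=
  sInf {lam : ℝ | 0 < lam ∧ ∫⁻ x in Ω, ENNReal.ofReal (A (|u x| / lam)) ≤ 1}

/-- Membership in the Orlicz space `L_A(Ω)`. -/
def MemLA {N : ℕ} (A : ℝ → ℝ) (Ω : Set (EuclideanSpace ℝ (Fin N)))
    (u : EuclideanSpace ℝ (Fin N) → ℝ) : Prop :=
  Measurable u ∧ ∃ lam > (0:ℝ), ∫⁻ x in Ω, ENNReal.ofReal (A (lam * |u x|)) < ⊤

/-- The Gagliardo-type modular `∫_Ω∫_Ω A(|u x - u y|/|x-y|^s) |x-y|^{-N} dx dy`. -/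
def gaglModular {N : ℕ} (A : ℝ → ℝ) (s : ℝ) (Ω : Set (EuclideanSpace ℝ (Fin N)))
    (u : EuclideanSpace ℝ (Fin N) → ℝ) : ℝ≥0∞ :=
  ∫⁻ x in Ω, ∫⁻ y in Ω,
    ENNReal.ofReal (A (|u x - u y| / ‖x - y‖ ^ s) / ‖x - y‖ ^ N)

/-- The Gagliardo seminorm `[u]_{s,A}`. -/
def gaglSeminorm {N : ℕ} (A : ℝ → ℝ) (s : ℝ) (Ω : Set (EuclideanSpace ℝ (Fin N)))
    (u : EuclideanSpace ℝ (Fin N) → ℝ) : ℝ :=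
  sInf {lam : ℝ | 0 < lam ∧ ∫⁻ x in Ω, ∫⁻ y in Ω,
    ENNReal.ofReal (A (|u x - u y| / (lam * ‖x - y‖ ^ s)) / ‖x - y‖ ^ N) ≤ 1}

/-- Membership in the fractional Orlicz–Sobolev space `W^s L_A(Ω)`. -/
def MemWsLA {N : ℕ} (A : ℝ → ℝ) (s : ℝ) (Ω : Set (EuclideanSpace ℝ (Fin N)))
    (u : EuclideanSpace ℝ (Fin N) → ℝ) : Prop :=
  MemLA A Ω u ∧ ∃ lam > (0:ℝ), (∫⁻ x in Ω, ∫⁻ y in Ω,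
    ENNReal.ofReal (A (lam * |u x - u y| / ‖x - y‖ ^ s) / ‖x - y‖ ^ N)) < ⊤

/-- The norm `‖u‖_{s,A} = ‖u‖_A + [u]_{s,A}` of `W^s L_A(Ω)`. -/
def fracNorm {N : ℕ} (A : ℝ → ℝ) (s : ℝ) (Ω : Set (EuclideanSpace ℝ (Fin N)))
    (u : EuclideanSpace ℝ (Fin N) → ℝ) : ℝ :=
  luxNorm A Ω u + gaglSeminorm A s Ω u

/-- Membership in `W^s_0 L_A(Ω)`: member of `W^s L_A(ℝ^N)` vanishing a.e. outside `Ω`. -/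
def MemW0 {N : ℕ} (A : ℝ → ℝ) (s : ℝ) (Ω : Set (EuclideanSpace ℝ (Fin N)))
    (u : EuclideanSpace ℝ (Fin N) → ℝ) : Prop :=
  MemWsLA A s Set.univ u ∧ ∀ᵐ x, x ∉ Ω → u x = 0

/-- The set of values `t a(t) / A(t)` for `t > 0`; `p₀` is its `sInf`, `p⁰` its `sSup`. -/
def ratioSet (A a : ℝ → ℝ) : Set ℝ := {r | ∃ t, 0 < t ∧ r = t * a t / A t}

/-- `Ω` has Lipschitz (C^{0,1}) boundary: near each boundary point, `Ω` is the
subgraph of a Lipschitz function in a suitable direction. -/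
def HasLipschitzBoundary {N : ℕ} (Ω : Set (EuclideanSpace ℝ (Fin N))) : Prop :=
  ∀ x ∈ frontier Ω, ∃ U : Set (EuclideanSpace ℝ (Fin N)), IsOpen U ∧ x ∈ U ∧
    ∃ (v : EuclideanSpace ℝ (Fin N)) (φ : EuclideanSpace ℝ (Fin N) → ℝ) (K : ℝ≥0),
      ‖v‖ = 1 ∧ LipschitzWith K φ ∧
      Ω ∩ U = {y | y ∈ U ∧ (inner ℝ y v : ℝ) < φ (y - (inner ℝ y v : ℝ) • v)}


open Metric
open scoped Topology

/-!
Choose `R > 0` with `Ω ⊆ closedBall 0 R`. For `‖x‖ ≤ R`, the shell `R < ‖y‖ < 2R` lies outside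
`Ω`, where `u` vanishes, and within distance `3R` of `x`. Restricting the inner integral of the
Gagliardo modular to this shell, and using that its kernel decreases in `‖x - y‖`, bounds
`|shell| (3R)^{-N} ∫ A(|u| / (λ (3R)^s))` by the Gagliardo modular at scale `λ`. Convexity,
`A(z / K) ≤ A(z) / K` for `K ≥ 1`, absorbs the constant: whenever `λ` is admissible for
`[u]_{s,A}`, `K (3R)^s λ` is admissible for `‖u‖_A`.
-/

namespace IsNFunction

variable {A : ℝ → ℝ}

theorem map_zero (hA : IsNFunction A) : A 0 = 0 := by
  have hcont : Tendsto A (𝓝[>] 0) (𝓝 (A 0)) := hA.continuous.continuousWithinAt.tendsto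
  have hzero : Tendsto (fun t => A t / t * t) (𝓝[>] 0) (𝓝 0) := by
    simpa using hA.tendsto_zero.mul (tendsto_nhdsWithin_of_tendsto_nhds tendsto_id)
  refine tendsto_nhds_unique hcont (hzero.congr' ?_)
  filter_upwards [self_mem_nhdsWithin] with t ht
  exact div_mul_cancel₀ _ (ne_of_gt ht)

theorem nonneg (hA : IsNFunction A) (t : ℝ) : 0 ≤ A t := by
  rcases lt_trichotomy t 0 with ht | rfl | ht
  · rw [← hA.even]; exact (hA.pos _ (neg_pos.mpr ht)).le
  · exact hA.map_zero.ge
  · exact (hA.pos t ht).le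

theorem map_mul_le (hA : IsNFunction A) {c z : ℝ} (hc₀ : 0 ≤ c) (hc₁ : c ≤ 1) (hz : 0 ≤ z) :
    A (c * z) ≤ c * A z := by
  have := hA.convexOn.2 (mem_Ici.2 le_rfl) (mem_Ici.2 hz) (sub_nonneg.2 hc₁) hc₀ (by ring)
  simpa [hA.map_zero] using this

theorem map_div_le (hA : IsNFunction A) {z t : ℝ} (hz : 0 ≤ z) (ht : 1 ≤ t) :
    A (z / t) ≤ A z / t := by
  simpa [div_eq_inv_mul] using
    hA.map_mul_le (inv_nonneg.2 (zero_le_one.trans ht)) (inv_le_one_of_one_le₀ ht) hz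

theorem monotoneOn (hA : IsNFunction A) : MonotoneOn A (Ici 0) := by
  intro a ha b _ hab
  rcases (mem_Ici.1 ha).eq_or_lt with rfl | ha₀
  · rw [hA.map_zero]; exact hA.nonneg b
  have hb : 0 < b := ha₀.trans_le hab
  calc A a = A (a / b * b) := by rw [div_mul_cancel₀ _ hb.ne']
    _ ≤ a / b * A b := hA.map_mul_le (by positivity) ((div_le_one hb).2 hab) hb.le
    _ ≤ A b := mul_le_of_le_one_left (hA.nonneg b) ((div_le_one hb).2 hab)

theorem map_div_rpow_div_pow_le (hA : IsNFunction A) {z lam r ρ s : ℝ} (n : ℕ) (hz : 0 ≤ z)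
    (hlam : 0 < lam) (hs : 0 ≤ s) (hr : 0 < r) (hrρ : r ≤ ρ) :
    A (z / (lam * ρ ^ s)) / ρ ^ n ≤ A (z / (lam * r ^ s)) / r ^ n := by
  have hρ : 0 < ρ := hr.trans_le hrρ
  have hAle : A (z / (lam * ρ ^ s)) ≤ A (z / (lam * r ^ s)) :=
    hA.monotoneOn (mem_Ici.2 (div_nonneg hz (by positivity)))
      (mem_Ici.2 (div_nonneg hz (by positivity)))
      (div_le_div_of_nonneg_left hz (by positivity) (by gcongr))
  exact div_le_div₀ (hA.nonneg _) hAle (by positivity) (pow_le_pow_left₀ hr.le hrρ n)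

end IsNFunction

section Modular

variable {α β : Type*} [MeasurableSpace α] [MeasurableSpace β] {A : ℝ → ℝ}

theorem IsNFunction.lintegral_div_le (hA : IsNFunction A) (μ : Measure α) {f w : α → ℝ}
    (hf : ∀ x, 0 ≤ f x) (hw : ∀ x, 0 ≤ w x) {t : ℝ} (ht : 1 ≤ t) :
    ∫⁻ x, ENNReal.ofReal (A (f x / t) / w x) ∂μ ≤
      ENNReal.ofReal t⁻¹ * ∫⁻ x, ENNReal.ofReal (A (f x) / w x) ∂μ := by
  rw [← lintegral_const_mul' _ _ ENNReal.ofReal_ne_top]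
  refine lintegral_mono fun x => ?_
  rw [← ENNReal.ofReal_mul (inv_nonneg.2 (zero_le_one.trans ht))]
  refine ENNReal.ofReal_le_ofReal ?_
  calc A (f x / t) / w x ≤ A (f x) / t / w x := by gcongr; exacts [hw x, hA.map_div_le (hf x) ht]
    _ = t⁻¹ * (A (f x) / w x) := by ring

theorem IsNFunction.lintegral_lintegral_div_le (hA : IsNFunction A) (μ : Measure α)
    (ν : Measure β) {f w : α → β → ℝ} (hf : ∀ x y, 0 ≤ f x y) (hw : ∀ x y, 0 ≤ w x y)
    {t : ℝ} (ht : 1 ≤ t) :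
    ∫⁻ x, ∫⁻ y, ENNReal.ofReal (A (f x y / t) / w x y) ∂ν ∂μ ≤
      ENNReal.ofReal t⁻¹ * ∫⁻ x, ∫⁻ y, ENNReal.ofReal (A (f x y) / w x y) ∂ν ∂μ :=
  calc _ ≤ ∫⁻ x, ENNReal.ofReal t⁻¹ * ∫⁻ y, ENNReal.ofReal (A (f x y) / w x y) ∂ν ∂μ :=
        lintegral_mono fun x => hA.lintegral_div_le ν (hf x) (hw x) ht
    _ = _ := lintegral_const_mul' _ _ ENNReal.ofReal_ne_top

theorem IsNFunction.exists_one_le_lintegral_lintegral_div_le_one (hA : IsNFunction A)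
    (μ : Measure α) (ν : Measure β) {f w : α → β → ℝ} (hf : ∀ x y, 0 ≤ f x y)
    (hw : ∀ x y, 0 ≤ w x y)
    (hfin : ∫⁻ x, ∫⁻ y, ENNReal.ofReal (A (f x y) / w x y) ∂ν ∂μ ≠ ⊤) :
    ∃ t, 1 ≤ t ∧ ∫⁻ x, ∫⁻ y, ENNReal.ofReal (A (f x y / t) / w x y) ∂ν ∂μ ≤ 1 := by
  set M := ∫⁻ x, ∫⁻ y, ENNReal.ofReal (A (f x y) / w x y) ∂ν ∂μ
  set t := max 1 M.toReal
  have ht : 1 ≤ t := le_max_left _ _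
  refine ⟨t, ht, (hA.lintegral_lintegral_div_le μ ν hf hw ht).trans ?_⟩
  calc ENNReal.ofReal t⁻¹ * M = ENNReal.ofReal (t⁻¹ * M.toReal) := by
        rw [ENNReal.ofReal_mul (by positivity), ENNReal.ofReal_toReal hfin]
    _ ≤ 1 := ENNReal.ofReal_le_one.2 (inv_mul_le_one_of_le₀ (le_max_right _ _) (by positivity))

theorem IsNFunction.lintegral_div_le_one (hA : IsNFunction A) (μ : Measure α) {f : α → ℝ}
    (hf : ∀ x, 0 ≤ f x) {c : ℝ≥0∞} {K : ℝ} (hK : 1 ≤ K) (hcK : c⁻¹ ≤ ENNReal.ofReal K)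
    (h : c * ∫⁻ x, ENNReal.ofReal (A (f x)) ∂μ ≤ 1) :
    ∫⁻ x, ENNReal.ofReal (A (f x / K)) ∂μ ≤ 1 :=
  calc _ ≤ ENNReal.ofReal K⁻¹ * ∫⁻ x, ENNReal.ofReal (A (f x)) ∂μ := by
        simpa using hA.lintegral_div_le μ hf (w := 1) (fun _ => zero_le_one) hK
    _ ≤ ENNReal.ofReal K⁻¹ * ENNReal.ofReal K := by
        gcongr
        exact (ENNReal.le_inv_iff_mul_le.2 (by rwa [mul_comm])).trans hcK
    _ = 1 := by
        rw [← ENNReal.ofReal_mul (inv_nonneg.2 (zero_le_one.trans hK)),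
          inv_mul_cancel₀ (zero_lt_one.trans_le hK).ne', ENNReal.ofReal_one]

end Modular

section Shell

variable {E : Type*} [SeminormedAddCommGroup E] [MeasurableSpace E] [OpensMeasurableSpace E]
  {A : ℝ → ℝ} {u : E → ℝ} {s R lam : ℝ}

theorem IsNFunction.measure_shell_mul_le_lintegral (hA : IsNFunction A) (μ : Measure E)
    (n : ℕ) (hs : 0 ≤ s) (hlam : 0 < lam) (hu : ∀ᵐ y ∂μ, R < ‖y‖ → u y = 0) {x : E}
    (hx : ‖x‖ ≤ R) :
    μ (ball 0 (2 * R) \ closedBall 0 R) * ENNReal.ofReal ((3 * R) ^ n)⁻¹ *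
        ENNReal.ofReal (A (|u x| / (lam * (3 * R) ^ s))) ≤
      ∫⁻ y, ENNReal.ofReal (A (|u x - u y| / (lam * ‖x - y‖ ^ s)) / ‖x - y‖ ^ n) ∂μ := by
  have hR : 0 ≤ R := (norm_nonneg x).trans hx
  rw [mul_assoc, ← ENNReal.ofReal_mul (by positivity), inv_mul_eq_div, mul_comm,
    ← setLIntegral_const]
  refine (lintegral_mono_ae ?_).trans (setLIntegral_le_lintegral _ _)
  filter_upwards [ae_restrict_mem (measurableSet_ball.diff measurableSet_closedBall),
    ae_restrict_of_ae hu] with y ⟨hy₂, hy₁⟩ huy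
  rw [mem_ball_zero_iff] at hy₂
  rw [mem_closedBall_zero_iff, not_le] at hy₁
  have hxy₀ : 0 < ‖x - y‖ :=
    calc 0 < ‖y‖ - ‖x‖ := by linarith
      _ ≤ ‖x - y‖ := norm_sub_rev y x ▸ norm_sub_norm_le y x
  have hxy : ‖x - y‖ ≤ 3 * R := by linarith [norm_sub_le x y]
  rw [huy hy₁, sub_zero]
  exact ENNReal.ofReal_le_ofReal
    (hA.map_div_rpow_div_pow_le n (abs_nonneg _) hlam hs hxy₀ hxy)

theorem IsNFunction.measure_shell_mul_lintegral_le (hA : IsNFunction A) (μ : Measure E)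
    (n : ℕ) (hs : 0 ≤ s) (hlam : 0 < lam) (hu : ∀ᵐ y ∂μ, R < ‖y‖ → u y = 0) :
    μ (ball 0 (2 * R) \ closedBall 0 R) * ENNReal.ofReal ((3 * R) ^ n)⁻¹ *
        ∫⁻ x, ENNReal.ofReal (A (|u x| / (lam * (3 * R) ^ s))) ∂μ ≤
      ∫⁻ x, ∫⁻ y, ENNReal.ofReal (A (|u x - u y| / (lam * ‖x - y‖ ^ s)) / ‖x - y‖ ^ n) ∂μ ∂μ := by
  refine (lintegral_const_mul_le _ _).trans (lintegral_mono_ae ?_)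
  filter_upwards [hu] with x hux
  by_cases hx : ‖x‖ ≤ R
  · exact hA.measure_shell_mul_le_lintegral μ n hs hlam hu hx
  · simp [hux (not_le.1 hx), hA.map_zero]

end Shell

theorem measure_ball_sdiff_closedBall_ne_zero {E : Type*} [NormedAddCommGroup E]
    [NormedSpace ℝ E] [Nontrivial E] [MeasurableSpace E] (μ : Measure E) [μ.IsOpenPosMeasure]
    {R : ℝ} (hR : 0 < R) : μ (ball 0 (2 * R) \ closedBall 0 R) ≠ 0 := by
  obtain ⟨y, hy⟩ := exists_norm_eq E (by positivity : 0 ≤ 3 / 2 * R)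
  refine (isOpen_ball.sdiff isClosed_closedBall).measure_ne_zero μ ⟨y, ?_⟩
  simp only [Set.mem_sdiff, mem_ball_zero_iff, mem_closedBall_zero_iff, hy]
  constructor <;> linarith

theorem MemWsLA.exists_gagliardo_le_one {N : ℕ} {A : ℝ → ℝ} {s : ℝ}
    {Ω : Set (EuclideanSpace ℝ (Fin N))} {u : EuclideanSpace ℝ (Fin N) → ℝ}
    (hu : MemWsLA A s Ω u) (hA : IsNFunction A) :
    ∃ lam > 0, ∫⁻ x in Ω, ∫⁻ y in Ω,
      ENNReal.ofReal (A (|u x - u y| / (lam * ‖x - y‖ ^ s)) / ‖x - y‖ ^ N) ≤ 1 := by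
  obtain ⟨-, lam₀, hlam₀, hfin⟩ := hu
  obtain ⟨t, ht, hle⟩ := hA.exists_one_le_lintegral_lintegral_div_le_one _ _
    (fun x y => by positivity) (fun x y => by positivity) hfin.ne
  refine ⟨t / lam₀, by positivity, le_of_eq_of_le ?_ hle⟩
  congr! 6 with x y
  field_simp

theorem Real.sInf_le_mul_sInf {S T : Set ℝ} {c : ℝ} (hc : 0 ≤ c) (hT : BddBelow T)
    (hS : S.Nonempty) (hST : ∀ l ∈ S, c * l ∈ T) : sInf T ≤ c * sInf S := by
  rw [← smul_eq_mul, ← Real.sInf_smul_of_nonneg hc]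
  exact csInf_le_csInf hT (hS.smul_set) (by rintro _ ⟨l, hl, rfl⟩; exact hST l hl)

theorem generalized_poincare_W0_general {N : ℕ} (hN : 0 < N)
    (Ω : Set (EuclideanSpace ℝ (Fin N)))
    (hΩb : Bornology.IsBounded Ω)
    (s : ℝ) (hs : s ∈ Set.Ioo (0:ℝ) 1) (A : ℝ → ℝ) (hA : IsNFunction A) :
    ∃ μ > (0:ℝ), ∀ u : EuclideanSpace ℝ (Fin N) → ℝ, MemW0 A s Ω u →
      luxNorm A Set.univ u ≤ μ * gaglSeminorm A s Set.univ u := by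
  have : Nonempty (Fin N) := ⟨⟨0, hN⟩⟩
  obtain ⟨R, hR, hΩR⟩ := hΩb.subset_closedBall_lt 0 0
  set c := volume (ball (0 : EuclideanSpace ℝ (Fin N)) (2 * R) \ closedBall 0 R) *
    ENNReal.ofReal ((3 * R) ^ N)⁻¹
  have hc : c ≠ 0 := mul_ne_zero (measure_ball_sdiff_closedBall_ne_zero volume hR)
    (ENNReal.ofReal_pos.2 (by positivity)).ne'
  obtain ⟨K, hK, hcK⟩ : ∃ K : ℝ, 1 ≤ K ∧ c⁻¹ ≤ ENNReal.ofReal K :=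
    ⟨max 1 c⁻¹.toReal, le_max_left _ _, (ENNReal.ofReal_toReal (ENNReal.inv_ne_top.2 hc)).ge.trans
      (ENNReal.ofReal_le_ofReal (le_max_right _ _))⟩
  refine ⟨K * (3 * R) ^ s, by positivity, fun u ⟨hu, hu₀⟩ => ?_⟩
  have hu' : ∀ᵐ y, R < ‖y‖ → u y = 0 := hu₀.mono fun y hy hRy =>
    hy fun hyΩ => hRy.not_ge (mem_closedBall_zero_iff.1 (hΩR hyΩ))
  refine Real.sInf_le_mul_sInf (by positivity) ⟨0, fun _ hl => hl.1.le⟩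
    (hu.exists_gagliardo_le_one hA) fun lam ⟨hlam, hmod⟩ => ⟨by positivity, ?_⟩
  simp only [Measure.restrict_univ] at hmod ⊢
  convert hA.lintegral_div_le_one volume (fun x => by positivity) hK hcK
    ((hA.measure_shell_mul_lintegral_le volume N hs.1.le hlam hu').trans hmod) using 4
  rw [div_div, mul_comm (lam * _), mul_assoc, mul_comm lam]

/-- Poincaré inequality on `W^s_0 L_A(Ω)`: on a bounded open set `Ω`,
`‖u‖_A ≤ μ [u]_{s,A}` (norms over `ℝ^N`) for all `u ∈ W^s_0 L_A(Ω)`. -/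
theorem generalized_poincare_W0 {N : ℕ} (hN : 0 < N)
    (Ω : Set (EuclideanSpace ℝ (Fin N))) (hΩo : IsOpen Ω)
    (hΩb : Bornology.IsBounded Ω)
    (s : ℝ) (hs : s ∈ Set.Ioo (0:ℝ) 1) (A : ℝ → ℝ) (hA : IsNFunction A) :
    ∃ μ > (0:ℝ), ∀ u : EuclideanSpace ℝ (Fin N) → ℝ, MemW0 A s Ω u →
      luxNorm A Set.univ u ≤ μ * gaglSeminorm A s Set.univ u :=
  generalized_poincare_W0_general hN Ω hΩb s hs A hA

end
end

section
/- Let Ω be a bounded open subset of ℝ^N, s ∈ (0,1), and A an N-function. Then every function u of class C² on ℝ^N with compact support contained in Ω belongs to W^s_0L_A(Ω); in particular there exists λ > 0 such that ∫_{ℝ^N}∫_{ℝ^N} A(λ|u(x)−u(y)|/|x−y|^s) dx dy/|x−y|^N < ∞. -/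
open MeasureTheory Filter Set
open scoped ENNReal NNReal RealInnerProductSpace

noncomputable section

/-!
Since `u` is Lipschitz and bounded, some `λ > 0` gives `λ |u x - u y| ≤ min (|x - y|, 1)`. Then
the argument of `A` in the Gagliardo modular lies in `[0, 1]` (because `min (r, 1) ≤ r ^ s`), where
convexity and `A 0 = 0` give `A t ≤ t A(1)`. Hence the integrand is at most
`A(1) min (r, 1) / r ^ (s + N)` with `r = |x - y|`, and it vanishes unless `x` or `y` lies in the
compact support `K` of `u`. In polar coordinates this kernel is `min (r, 1) / r ^ (s + 1)`,
integrable on `(0, ∞)` exactly because `0 < s < 1`, so the double integral is at most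
`2 |K| A(1) ∫ min (|z|, 1) / |z| ^ (s + N) dz < ∞`.
-/

open Topology Module

lemma IsNFunction.zero {A : ℝ → ℝ} (hA : IsNFunction A) : A 0 = 0 := by
  have hA_lim : Tendsto A (𝓝[>] 0) (𝓝 (A 0)) :=
    hA.continuous.continuousAt.tendsto.mono_left nhdsWithin_le_nhds
  have hA_zero : Tendsto A (𝓝[>] 0) (𝓝 0) := by
    have h := hA.tendsto_zero.mul (tendsto_id.mono_left nhdsWithin_le_nhds)
    rw [zero_mul] at h
    refine h.congr' ?_
    filter_upwards [self_mem_nhdsWithin] with t (ht : 0 < t)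
    exact div_mul_cancel₀ (A t) ht.ne'
  exact tendsto_nhds_unique hA_lim hA_zero

lemma IsNFunction.nonneg_s4 {A : ℝ → ℝ} (hA : IsNFunction A) {t : ℝ} (ht : 0 ≤ t) : 0 ≤ A t := by
  rcases ht.eq_or_lt with rfl | ht
  · exact hA.zero.ge
  · exact (hA.pos t ht).le

lemma IsNFunction.le_mul_one {A : ℝ → ℝ} (hA : IsNFunction A) {t : ℝ} (ht0 : 0 ≤ t) (ht1 : t ≤ 1) :
    A t ≤ t * A 1 := by
  have h := hA.convexOn.2 (mem_Ici.mpr le_rfl) (mem_Ici.mpr zero_le_one)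
    (sub_nonneg.mpr ht1) ht0 (sub_add_cancel 1 t)
  simpa [hA.zero] using h

lemma min_one_le_rpow {r s : ℝ} (hr : 0 ≤ r) (hs0 : 0 ≤ s) (hs1 : s ≤ 1) : min r 1 ≤ r ^ s := by
  rcases le_total r 1 with h | h
  · exact (min_le_left r 1).trans (Real.self_le_rpow_of_le_one hr h hs1)
  · exact (min_le_right r 1).trans (Real.one_le_rpow h hs0)

lemma IsNFunction.apply_div_rpow_div_pow_le {A : ℝ → ℝ} (hA : IsNFunction A) {a r s : ℝ} (n : ℕ)
    (ha : 0 ≤ a) (har : a ≤ min r 1) (hs0 : 0 < s) (hs1 : s ≤ 1) :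
    A (a / r ^ s) / r ^ n ≤ A 1 * (min r 1 / r ^ (s + n)) := by
  have hr : 0 ≤ r := ha.trans (har.trans (min_le_left r 1))
  have hrs : 0 ≤ r ^ s := Real.rpow_nonneg hr s
  have hle : a / r ^ s ≤ min r 1 / r ^ s := div_le_div_of_nonneg_right har hrs
  have hle_one : min r 1 / r ^ s ≤ 1 := div_le_one_of_le₀ (min_one_le_rpow hr hs0.le hs1) hrs
  have hA_le : A (a / r ^ s) ≤ A 1 * (min r 1 / r ^ s) :=
    calc A (a / r ^ s) ≤ a / r ^ s * A 1 := hA.le_mul_one (by positivity) (hle.trans hle_one)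
      _ ≤ min r 1 / r ^ s * A 1 := mul_le_mul_of_nonneg_right hle (hA.nonneg_s4 zero_le_one)
      _ = A 1 * (min r 1 / r ^ s) := mul_comm _ _
  calc A (a / r ^ s) / r ^ n ≤ A 1 * (min r 1 / r ^ s) / r ^ n := by gcongr
    _ = A 1 * (min r 1 / r ^ (s + n)) := by
      rw [Real.rpow_add' hr (by positivity), Real.rpow_natCast, mul_div_assoc, div_div]

lemma LipschitzWith.exists_pos_mul_abs_sub_le_min_dist_one {α : Type*} [PseudoMetricSpace α]
    {u : α → ℝ} {L : ℝ≥0} (hu : LipschitzWith L u) {M : ℝ} (hM : ∀ x, |u x| ≤ M) :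
    ∃ lam > (0 : ℝ), ∀ x y, lam * |u x - u y| ≤ min (dist x y) 1 := by
  set c := max (max (L : ℝ) (2 * M)) 1
  have hc : 0 < c := lt_max_of_lt_right one_pos
  refine ⟨c⁻¹, inv_pos.mpr hc, fun x y => ?_⟩
  rw [inv_mul_le_iff₀ hc, mul_min_of_nonneg _ _ hc.le, mul_one]
  refine le_min ?_ ?_
  · calc |u x - u y| ≤ L * dist x y := by simpa [Real.dist_eq] using hu.dist_le_mul x y
      _ ≤ c * dist x y := by gcongr; exact (le_max_left _ _).trans (le_max_left _ _)
  · calc |u x - u y| ≤ |u x| + |u y| := abs_sub _ _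
      _ ≤ 2 * M := by linarith [hM x, hM y]
      _ ≤ c := (le_max_right _ _).trans (le_max_left _ _)

lemma integrableOn_Ioi_min_one_div_rpow {s : ℝ} (hs0 : 0 < s) (hs1 : s < 1) :
    IntegrableOn (fun y : ℝ => min y 1 / y ^ (s + 1)) (Ioi 0) := by
  have h_near : IntegrableOn (fun y : ℝ => y ^ (-s)) (Ioc 0 1) :=
    (intervalIntegral.intervalIntegrable_rpow' (by linarith)).1
  have h_far : IntegrableOn (fun y : ℝ => y ^ (-(s + 1))) (Ioi 1) :=
    integrableOn_Ioi_rpow_of_lt (by linarith) one_pos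
  rw [← Ioc_union_Ioi_eq_Ioi zero_le_one]
  refine (h_near.congr_fun (fun y hy => ?_) measurableSet_Ioc).union
    (h_far.congr_fun (fun y hy => ?_) measurableSet_Ioi)
  · obtain ⟨hy0, hy1⟩ := hy
    rw [min_eq_left hy1, Real.rpow_add hy0, Real.rpow_one, Real.rpow_neg hy0.le]
    field_simp
  · dsimp only
    rw [min_eq_right (le_of_lt hy), Real.rpow_neg (zero_le_one.trans (le_of_lt hy)), one_div]

section HaarMeasure

variable {E : Type*} [NormedAddCommGroup E] [NormedSpace ℝ E] [FiniteDimensional ℝ E]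
  [MeasurableSpace E] [BorelSpace E] (μ : Measure E) [μ.IsAddHaarMeasure]

lemma integrable_min_one_div_norm_rpow {s : ℝ} (hs0 : 0 < s) (hs1 : s < 1) :
    Integrable (fun x : E => min ‖x‖ 1 / ‖x‖ ^ (s + finrank ℝ E)) μ := by
  rcases subsingleton_or_nontrivial E with hE | hE
  · have h_zero : (fun x : E => min ‖x‖ 1 / ‖x‖ ^ (s + finrank ℝ E)) = 0 := by
      funext x
      simp [Subsingleton.elim x 0]
    rw [h_zero]
    exact integrable_zero _ _ _
  refine (integrable_fun_norm_addHaar μ (f := fun r => min r 1 / r ^ (s + finrank ℝ E))).2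
    ((integrableOn_Ioi_min_one_div_rpow hs0 hs1).congr_fun (fun y (hy : 0 < y) => ?_)
      measurableSet_Ioi)
  have hd : 1 ≤ finrank ℝ E := Module.finrank_pos
  have h_exp : s + (finrank ℝ E : ℝ) = (s + 1) + ((finrank ℝ E - 1 : ℕ) : ℝ) := by
    rw [Nat.cast_sub hd]; ring
  rw [smul_eq_mul, h_exp, Real.rpow_add hy, Real.rpow_natCast]
  field_simp

lemma lintegral_lintegral_indicator_add_mul_norm_sub {K : Set E} (hK : MeasurableSet K)
    {h : ℝ → ℝ≥0∞} (hh : Measurable h) :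
    ∫⁻ x, ∫⁻ y, (K.indicator 1 x + K.indicator 1 y) * h ‖x - y‖ ∂μ ∂μ
      = 2 * μ K * ∫⁻ z, h ‖z‖ ∂μ := by
  have h_meas : Measurable (Function.uncurry fun x y : E => h ‖x - y‖) :=
    hh.comp (measurable_fst.sub measurable_snd).norm
  have h_ind : Measurable (K.indicator (1 : E → ℝ≥0∞)) := measurable_one.indicator hK
  have h_inner : ∀ x, ∫⁻ y, h ‖x - y‖ ∂μ = ∫⁻ z, h ‖z‖ ∂μ := fun x => by
    simp_rw [norm_sub_rev x]
    exact lintegral_sub_right_eq_self (fun z => h ‖z‖) x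
  have h_left : ∫⁻ x, ∫⁻ y, K.indicator 1 x * h ‖x - y‖ ∂μ ∂μ = μ K * ∫⁻ z, h ‖z‖ ∂μ := by
    simp_rw [lintegral_const_mul _ h_meas.of_uncurry_left, h_inner]
    rw [lintegral_mul_const _ h_ind, lintegral_indicator_one hK]
  have h_right : ∫⁻ x, ∫⁻ y, K.indicator 1 y * h ‖x - y‖ ∂μ ∂μ
      = ∫⁻ x, ∫⁻ y, K.indicator 1 x * h ‖x - y‖ ∂μ ∂μ := by
    rw [lintegral_lintegral_swap ((h_ind.comp measurable_snd).mul h_meas).aemeasurable]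
    exact lintegral_congr fun x => lintegral_congr fun y => by rw [norm_sub_rev]
  calc ∫⁻ x, ∫⁻ y, (K.indicator 1 x + K.indicator 1 y) * h ‖x - y‖ ∂μ ∂μ
      = ∫⁻ x, (K.indicator 1 x * ∫⁻ z, h ‖z‖ ∂μ
          + ∫⁻ y, K.indicator 1 y * h ‖x - y‖ ∂μ) ∂μ := by
        refine lintegral_congr fun x => ?_
        simp_rw [add_mul]
        rw [lintegral_add_left (h_meas.of_uncurry_left.const_mul _), lintegral_const_mul _
          h_meas.of_uncurry_left, h_inner]
    _ = 2 * μ K * ∫⁻ z, h ‖z‖ ∂μ := by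
        rw [lintegral_add_left (h_ind.mul_const _), lintegral_mul_const _ h_ind,
          lintegral_indicator_one hK, h_right, h_left, two_mul, add_mul]

theorem IsNFunction.exists_lintegral_lintegral_lt_top {A : ℝ → ℝ} (hA : IsNFunction A)
    {s : ℝ} (hs0 : 0 < s) (hs1 : s < 1) {u : E → ℝ} {L : ℝ≥0} (hu : LipschitzWith L u)
    (hc : HasCompactSupport u) :
    ∃ lam > (0 : ℝ), ∫⁻ x, ∫⁻ y, ENNReal.ofReal
      (A (lam * |u x - u y| / ‖x - y‖ ^ s) / ‖x - y‖ ^ finrank ℝ E) ∂μ ∂μ < ⊤ := by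
  obtain ⟨M, hM⟩ := hc.exists_bound_of_continuous hu.continuous
  obtain ⟨lam, hlam, hlam_le⟩ := hu.exists_pos_mul_abs_sub_le_min_dist_one (M := M) hM
  set K := tsupport u
  set h : ℝ → ℝ≥0∞ := fun r => ENNReal.ofReal (A 1 * (min r 1 / r ^ (s + finrank ℝ E)))
  have h_le : ∀ x y, ENNReal.ofReal (A (lam * |u x - u y| / ‖x - y‖ ^ s) / ‖x - y‖ ^ finrank ℝ E)
      ≤ (K.indicator 1 x + K.indicator 1 y) * h ‖x - y‖ := fun x y => by
    by_cases hxy : x ∈ K ∨ y ∈ K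
    · have h_one : 1 ≤ K.indicator (1 : E → ℝ≥0∞) x + K.indicator 1 y := by
        rcases hxy with hx | hy
        · simp [hx]
        · simp [hy]
      calc _ ≤ h ‖x - y‖ := ENNReal.ofReal_le_ofReal <| hA.apply_div_rpow_div_pow_le _
            (by positivity) (by simpa [dist_eq_norm] using hlam_le x y) hs0 hs1.le
        _ ≤ _ := le_mul_of_one_le_left' h_one
    · obtain ⟨hx, hy⟩ := not_or.mp hxy
      simp [image_eq_zero_of_notMem_tsupport hx, image_eq_zero_of_notMem_tsupport hy, hA.zero]
  refine ⟨lam, hlam, (lintegral_mono fun x => lintegral_mono fun y => h_le x y).trans_lt ?_⟩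
  rw [lintegral_lintegral_indicator_add_mul_norm_sub μ (isClosed_tsupport u).measurableSet
    (by fun_prop)]
  exact ENNReal.mul_lt_top (ENNReal.mul_lt_top (by simp) hc.measure_lt_top)
    ((integrable_min_one_div_norm_rpow μ hs0 hs1).const_mul (A 1)).lintegral_lt_top

end HaarMeasure

lemma IsNFunction.memLA_of_continuous_of_hasCompactSupport {A : ℝ → ℝ} (hA : IsNFunction A)
    {N : ℕ} (Ω : Set (EuclideanSpace ℝ (Fin N))) {u : EuclideanSpace ℝ (Fin N) → ℝ}
    (hu : Continuous u) (hc : HasCompactSupport u) : MemLA A Ω u := by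
  refine ⟨hu.measurable, 1, one_pos, ?_⟩
  have h_int : Integrable (fun x => A (1 * |u x|)) :=
    (hA.continuous.comp (by fun_prop)).integrable_of_hasCompactSupport
      (hc.comp_left (g := fun t => A (1 * |t|)) (by simp [hA.zero]))
  exact h_int.integrableOn.lintegral_lt_top

theorem C2_compactSupport_mem_W0_general {N : ℕ}
    (Ω : Set (EuclideanSpace ℝ (Fin N)))
    (s : ℝ) (hs : s ∈ Set.Ioo (0:ℝ) 1) (A : ℝ → ℝ) (hA : IsNFunction A)
    (u : EuclideanSpace ℝ (Fin N) → ℝ)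
    (hu1 : ContDiff ℝ 2 u) (hu2 : HasCompactSupport u) (hu3 : tsupport u ⊆ Ω) :
    MemW0 A s Ω u ∧ ∃ lam > (0:ℝ),
      (∫⁻ x, ∫⁻ y, ENNReal.ofReal
        (A (lam * |u x - u y| / ‖x - y‖ ^ s) / ‖x - y‖ ^ N)) < ⊤ := by
  obtain ⟨L, hL⟩ := hu1.lipschitzWith_of_hasCompactSupport hu2 two_ne_zero
  obtain ⟨lam, hlam, h_fin⟩ := hA.exists_lintegral_lintegral_lt_top volume hs.1 hs.2 hL hu2
  rw [finrank_euclideanSpace_fin] at h_fin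
  have h_vanish : ∀ᵐ x, x ∉ Ω → u x = 0 :=
    ae_of_all _ fun x hx => image_eq_zero_of_notMem_tsupport fun hxu => hx (hu3 hxu)
  refine ⟨⟨⟨hA.memLA_of_continuous_of_hasCompactSupport _ hu1.continuous hu2, lam, hlam, ?_⟩,
    h_vanish⟩, lam, hlam, h_fin⟩
  simpa only [Measure.restrict_univ] using h_fin

/-- every `C²` function with compact support contained in `Ω`
belongs to `W^s_0 L_A(Ω)`; in particular its Gagliardo modular is finite for
some `λ > 0`. -/
theorem C2_compactSupport_mem_W0 {N : ℕ} (hN : 0 < N)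
    (Ω : Set (EuclideanSpace ℝ (Fin N))) (hΩo : IsOpen Ω)
    (hΩb : Bornology.IsBounded Ω)
    (s : ℝ) (hs : s ∈ Set.Ioo (0:ℝ) 1) (A : ℝ → ℝ) (hA : IsNFunction A)
    (u : EuclideanSpace ℝ (Fin N) → ℝ)
    (hu1 : ContDiff ℝ 2 u) (hu2 : HasCompactSupport u) (hu3 : tsupport u ⊆ Ω) :
    MemW0 A s Ω u ∧ ∃ lam > (0:ℝ),
      (∫⁻ x, ∫⁻ y, ENNReal.ofReal
        (A (lam * |u x - u y| / ‖x - y‖ ^ s) / ‖x - y‖ ^ N)) < ⊤ :=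
  C2_compactSupport_mem_W0_general Ω s hs A hA u hu1 hu2 hu3

end
end

section
/- Let Ω be an open subset of ℝ^N, s ∈ (0,1), and A an N-function with derivative a satisfying 1 < p₀ := inf_{t>0} t·a(t)/A(t) ≤ p⁰ := sup_{t>0} t·a(t)/A(t) < ∞. Set φ(u) = ∫_Ω∫_Ω A(|u(x)−u(y)|/|x−y|^s) dx dy/|x−y|^N. Then for every u ∈ W^sL_A(Ω) with [u]_{s,A} > 1, one has [u]_{s,A}^{p₀} ≤ φ(u) ≤ [u]_{s,A}^{p⁰}. -/
open MeasureTheory Filter Set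
open scoped ENNReal NNReal RealInnerProductSpace

noncomputable section

/-!
The bounds `p₀ ≤ t a(t) / A(t) ≤ p⁰` make `t ↦ A t / t ^ p₀` nondecreasing and `t ↦ A t / t ^ p⁰`
nonincreasing, so `σ ^ p₀ A (t / σ) ≤ A t ≤ σ ^ p⁰ A (t / σ)` for `σ ≥ 1`. Integrating, the modular
`φ(u)` and the modular `Φ(λ)` of `u / λ` satisfy `λ ^ p₀ Φ(λ) ≤ φ(u) ≤ λ ^ p⁰ Φ(λ)` for `λ ≥ 1`.
For `1 < λ < [u]` we have `Φ(λ) > 1`, and there are `λ > [u]` arbitrarily close to `[u]` with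
`Φ(λ) ≤ 1`; letting `λ → [u]` gives both bounds.
-/

open Topology

theorem monotoneOn_of_hasDerivWithinAt_Ici_nonneg {f f' : ℝ → ℝ} {D : Set ℝ}
    (hD : D.OrdConnected) (hf : ContinuousOn f D)
    (hf' : ∀ x ∈ D, HasDerivWithinAt f (f' x) (Ici x) x) (hf'₀ : ∀ x ∈ D, 0 ≤ f' x) :
    MonotoneOn f D := by
  intro x hx y hy hxy
  have hIcc : Icc x y ⊆ D := hD.out hx hy
  exact image_le_of_deriv_right_le_deriv_boundary continuousOn_const
    (fun z _ => hasDerivWithinAt_const z _ (f x)) le_rfl (hf.mono hIcc)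
    (fun z hz => hf' z (hIcc (Ico_subset_Icc_self hz)))
    (fun z hz => hf'₀ z (hIcc (Ico_subset_Icc_self hz))) ⟨hxy, le_rfl⟩

namespace IsNFunctionDeriv

variable {A a : ℝ → ℝ} {p q σ t : ℝ}

theorem apply_zero (h : IsNFunctionDeriv A a) : A 0 = 0 := by
  simpa using h.eq_integral 0 le_rfl

theorem apply_nonneg (h : IsNFunctionDeriv A a) (ht : 0 ≤ t) : 0 ≤ A t := by
  rcases ht.eq_or_lt with rfl | ht
  · exact h.apply_zero.ge
  · exact (h.toIsNFunction.pos t ht).le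

theorem hasDerivWithinAt_Ici (h : IsNFunctionDeriv A a) (ht : 0 ≤ t) :
    HasDerivWithinAt A (a t) (Ici t) t := by
  have hint : IntervalIntegrable a volume 0 t :=
    (h.monotone.mono (by rw [uIcc_of_le ht]; exact Icc_subset_Ici_self)).intervalIntegrable
  have hmeas : StronglyMeasurableAtFilter a (𝓝[Ioi t] t) :=
    ⟨Ioi t, self_mem_nhdsWithin, (aemeasurable_restrict_of_monotoneOn measurableSet_Ioi
      (h.monotone.mono fun _ hx => ht.trans (le_of_lt hx))).aestronglyMeasurable⟩
  exact (intervalIntegral.integral_hasDerivWithinAt_right hint hmeas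
      ((h.rightCont t ht).mono Ioi_subset_Ici_self)).congr
    (fun x hx => h.eq_integral x (ht.trans hx)) (h.eq_integral t ht)

theorem hasDerivWithinAt_mul_rpow_neg (h : IsNFunctionDeriv A a) (p : ℝ) (ht : 0 < t) :
    HasDerivWithinAt (fun x => A x * x ^ (-p)) (t ^ (-p - 1) * (t * a t - p * A t)) (Ici t) t := by
  refine ((h.hasDerivWithinAt_Ici ht.le).mul
    (Real.hasDerivAt_rpow_const (p := -p) (Or.inl ht.ne')).hasDerivWithinAt).congr_deriv ?_
  rw [show t ^ (-p) = t ^ (-p - 1) * t by rw [← Real.rpow_add_one ht.ne']; ring_nf]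
  ring

theorem continuousOn_mul_rpow_neg (h : IsNFunctionDeriv A a) (p : ℝ) :
    ContinuousOn (fun x => A x * x ^ (-p)) (Ioi 0) := fun x hx =>
  (h.toIsNFunction.continuous.continuousAt.mul
    (Real.continuousAt_rpow_const x (-p) (Or.inl (ne_of_gt hx)))).continuousWithinAt

theorem monotoneOn_mul_rpow_neg (h : IsNFunctionDeriv A a)
    (hlow : ∀ t > 0, p * A t ≤ t * a t) : MonotoneOn (fun x => A x * x ^ (-p)) (Ioi 0) :=
  monotoneOn_of_hasDerivWithinAt_Ici_nonneg ordConnected_Ioi (h.continuousOn_mul_rpow_neg p)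
    (fun _ hx => h.hasDerivWithinAt_mul_rpow_neg p hx)
    (fun x hx => mul_nonneg (Real.rpow_nonneg (le_of_lt hx) _) (sub_nonneg.2 (hlow x hx)))

theorem antitoneOn_mul_rpow_neg (h : IsNFunctionDeriv A a)
    (hup : ∀ t > 0, t * a t ≤ q * A t) : AntitoneOn (fun x => A x * x ^ (-q)) (Ioi 0) := by
  have hmono : MonotoneOn (fun x => -(A x * x ^ (-q))) (Ioi 0) :=
    monotoneOn_of_hasDerivWithinAt_Ici_nonneg ordConnected_Ioi
      (h.continuousOn_mul_rpow_neg q).neg (fun _ hx => (h.hasDerivWithinAt_mul_rpow_neg q hx).neg)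
      (fun x hx => neg_nonneg.2
        (mul_nonpos_of_nonneg_of_nonpos (Real.rpow_nonneg (le_of_lt hx) _)
          (sub_nonpos.2 (hup x hx))))
  exact fun x hx y hy hxy => neg_le_neg_iff.1 (hmono hx hy hxy)

theorem rpow_mul_apply_div_le (h : IsNFunctionDeriv A a) (hlow : ∀ t > 0, p * A t ≤ t * a t)
    (hσ : 1 ≤ σ) (ht : 0 ≤ t) : σ ^ p * A (t / σ) ≤ A t := by
  have hσ₀ : 0 < σ := zero_lt_one.trans_le hσ
  rcases ht.eq_or_lt with rfl | ht
  · simp [h.apply_zero]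
  have key := h.monotoneOn_mul_rpow_neg hlow (div_pos ht hσ₀) ht (div_le_self ht.le hσ)
  simp only [Real.rpow_neg (div_pos ht hσ₀).le, Real.rpow_neg ht.le, Real.div_rpow ht.le hσ₀.le,
    inv_div, ← div_eq_mul_inv] at key
  rwa [mul_div_assoc', mul_comm (A _), div_le_div_iff_of_pos_right (Real.rpow_pos_of_pos ht p)]
    at key

theorem apply_le_rpow_mul_apply_div (h : IsNFunctionDeriv A a)
    (hup : ∀ t > 0, t * a t ≤ q * A t) (hσ : 1 ≤ σ) (ht : 0 ≤ t) :
    A t ≤ σ ^ q * A (t / σ) := by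
  have hσ₀ : 0 < σ := zero_lt_one.trans_le hσ
  rcases ht.eq_or_lt with rfl | ht
  · simp [h.apply_zero]
  have key := h.antitoneOn_mul_rpow_neg hup (div_pos ht hσ₀) ht (div_le_self ht.le hσ)
  simp only [Real.rpow_neg (div_pos ht hσ₀).le, Real.rpow_neg ht.le, Real.div_rpow ht.le hσ₀.le,
    inv_div, ← div_eq_mul_inv] at key
  rwa [mul_div_assoc', mul_comm (A _), div_le_div_iff_of_pos_right (Real.rpow_pos_of_pos ht q)]
    at key

theorem nonneg_of_mem_ratioSet (h : IsNFunctionDeriv A a) {r : ℝ} (hr : r ∈ ratioSet A a) :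
    0 ≤ r := by
  obtain ⟨t, ht, rfl⟩ := hr
  exact div_nonneg (mul_nonneg ht.le (h.pos t ht).le) (h.apply_nonneg ht.le)

theorem sInf_ratioSet_mul_le (h : IsNFunctionDeriv A a) (ht : 0 < t) :
    sInf (ratioSet A a) * A t ≤ t * a t :=
  (le_div_iff₀ (h.toIsNFunction.pos t ht)).1
    (csInf_le ⟨0, fun _ hr => h.nonneg_of_mem_ratioSet hr⟩ ⟨t, ht, rfl⟩)

theorem mul_le_sSup_ratioSet_mul (h : IsNFunctionDeriv A a) (hbdd : BddAbove (ratioSet A a))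
    (ht : 0 < t) : t * a t ≤ sSup (ratioSet A a) * A t :=
  (div_le_iff₀ (h.toIsNFunction.pos t ht)).1 (le_csSup hbdd ⟨t, ht, rfl⟩)

theorem sSup_ratioSet_nonneg (h : IsNFunctionDeriv A a) : 0 ≤ sSup (ratioSet A a) :=
  Real.sSup_nonneg fun _ hr => h.nonneg_of_mem_ratioSet hr

end IsNFunctionDeriv

theorem tendsto_ofReal_rpow_const {L : ℝ} (hL : 0 < L) (p : ℝ) :
    Tendsto (fun r : ℝ => ENNReal.ofReal (r ^ p)) (𝓝 L) (𝓝 (ENNReal.ofReal (L ^ p))) :=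
  (ENNReal.continuous_ofReal.tendsto _).comp (Real.continuousAt_rpow_const L p (Or.inl hL.ne'))

section Modular

variable {N : ℕ} {A a : ℝ → ℝ} {s p q lam : ℝ} {Ω : Set (EuclideanSpace ℝ (Fin N))}
  {u : EuclideanSpace ℝ (Fin N) → ℝ}

theorem gaglModular_mono {F G : ℝ → ℝ} (hFG : ∀ t, 0 ≤ t → F t ≤ G t) :
    gaglModular F s Ω u ≤ gaglModular G s Ω u :=
  lintegral_mono fun _ => lintegral_mono fun _ => ENNReal.ofReal_le_ofReal <|
    div_le_div_of_nonneg_right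
      (hFG _ (div_nonneg (abs_nonneg _) (Real.rpow_nonneg (norm_nonneg _) _)))
      (pow_nonneg (norm_nonneg _) _)

theorem gaglModular_const_mul {c : ℝ} (hc : 0 ≤ c) (F : ℝ → ℝ) :
    gaglModular (fun t => c * F t) s Ω u = ENNReal.ofReal c * gaglModular F s Ω u := by
  simp only [gaglModular, mul_div_assoc, ENNReal.ofReal_mul hc]
  rw [← lintegral_const_mul' _ _ ENNReal.ofReal_ne_top]
  exact lintegral_congr fun x => lintegral_const_mul' _ _ ENNReal.ofReal_ne_top

theorem gaglSeminorm_eq_sInf :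
    gaglSeminorm A s Ω u =
      sInf {lam | 0 < lam ∧ gaglModular (fun t => A (t / lam)) s Ω u ≤ 1} := by
  simp only [gaglSeminorm, gaglModular, div_div, mul_comm]

theorem gaglSeminorm_le_of_gaglModular_div_le_one (hlam : 0 < lam)
    (h : gaglModular (fun t => A (t / lam)) s Ω u ≤ 1) : gaglSeminorm A s Ω u ≤ lam := by
  rw [gaglSeminorm_eq_sInf]
  exact csInf_le ⟨0, fun _ hr => hr.1.le⟩ ⟨hlam, h⟩

theorem exists_gaglModular_div_le_one_of_gaglSeminorm_lt (hpos : 0 < gaglSeminorm A s Ω u)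
    (hlt : gaglSeminorm A s Ω u < lam) :
    ∃ μ < lam, 0 < μ ∧ gaglModular (fun t => A (t / μ)) s Ω u ≤ 1 := by
  rw [gaglSeminorm_eq_sInf] at hpos hlt
  -- `sInf ∅ = 0` in `ℝ`, so a positive infimum forces the set to be nonempty.
  have hne : {lam | 0 < lam ∧ gaglModular (fun t => A (t / lam)) s Ω u ≤ 1}.Nonempty :=
    nonempty_iff_ne_empty.2 fun h => by simp [h] at hpos
  obtain ⟨μ, hμ, hμlam⟩ := exists_lt_of_csInf_lt hne hlt
  exact ⟨μ, hμlam, hμ⟩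

theorem rpow_mul_gaglModular_div_le (h : IsNFunctionDeriv A a)
    (hlow : ∀ t > 0, p * A t ≤ t * a t) (hlam : 1 ≤ lam) :
    ENNReal.ofReal (lam ^ p) * gaglModular (fun t => A (t / lam)) s Ω u ≤
      gaglModular A s Ω u := by
  rw [← gaglModular_const_mul (Real.rpow_nonneg (zero_le_one.trans hlam) p)]
  exact gaglModular_mono fun t ht => h.rpow_mul_apply_div_le hlow hlam ht

theorem gaglModular_le_rpow_mul_gaglModular_div (h : IsNFunctionDeriv A a)
    (hup : ∀ t > 0, t * a t ≤ q * A t) (hlam : 1 ≤ lam) :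
    gaglModular A s Ω u ≤
      ENNReal.ofReal (lam ^ q) * gaglModular (fun t => A (t / lam)) s Ω u := by
  rw [← gaglModular_const_mul (Real.rpow_nonneg (zero_le_one.trans hlam) q)]
  exact gaglModular_mono fun t ht => h.apply_le_rpow_mul_apply_div hup hlam ht

theorem ofReal_rpow_gaglSeminorm_le (h : IsNFunctionDeriv A a)
    (hlow : ∀ t > 0, p * A t ≤ t * a t) (hgt : 1 < gaglSeminorm A s Ω u) :
    ENNReal.ofReal (gaglSeminorm A s Ω u ^ p) ≤ gaglModular A s Ω u := by
  refine le_of_tendsto (x := 𝓝[<] gaglSeminorm A s Ω u)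
    ((tendsto_ofReal_rpow_const (zero_lt_one.trans hgt) p).mono_left nhdsWithin_le_nhds) ?_
  filter_upwards [Ioo_mem_nhdsLT hgt] with r ⟨h1r, hr⟩
  have hmod : 1 < gaglModular (fun t => A (t / r)) s Ω u := by
    by_contra! hle
    exact hr.not_ge (gaglSeminorm_le_of_gaglModular_div_le_one (zero_lt_one.trans h1r) hle)
  calc ENNReal.ofReal (r ^ p)
      ≤ ENNReal.ofReal (r ^ p) * gaglModular (fun t => A (t / r)) s Ω u :=
        le_mul_of_one_le_right' hmod.le
    _ ≤ gaglModular A s Ω u := rpow_mul_gaglModular_div_le h hlow h1r.le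

theorem gaglModular_le_ofReal_rpow_gaglSeminorm (h : IsNFunctionDeriv A a)
    (hup : ∀ t > 0, t * a t ≤ q * A t) (hq : 0 ≤ q) (hgt : 1 < gaglSeminorm A s Ω u) :
    gaglModular A s Ω u ≤ ENNReal.ofReal (gaglSeminorm A s Ω u ^ q) := by
  have hpos := zero_lt_one.trans hgt
  refine ge_of_tendsto (x := 𝓝[>] gaglSeminorm A s Ω u)
    ((tendsto_ofReal_rpow_const hpos q).mono_left nhdsWithin_le_nhds) ?_
  filter_upwards [self_mem_nhdsWithin] with r (hr : gaglSeminorm A s Ω u < r)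
  obtain ⟨μ, hμr, hμ, hmod⟩ := exists_gaglModular_div_le_one_of_gaglSeminorm_lt hpos hr
  have h1μ : 1 ≤ μ := hgt.le.trans (gaglSeminorm_le_of_gaglModular_div_le_one hμ hmod)
  calc gaglModular A s Ω u
      ≤ ENNReal.ofReal (μ ^ q) * gaglModular (fun t => A (t / μ)) s Ω u :=
        gaglModular_le_rpow_mul_gaglModular_div h hup h1μ
    _ ≤ ENNReal.ofReal (μ ^ q) := mul_le_of_le_one_right' hmod
    _ ≤ ENNReal.ofReal (r ^ q) := ENNReal.ofReal_le_ofReal (Real.rpow_le_rpow hμ.le hμr.le hq)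

end Modular

theorem modular_bounds_of_seminorm_gt_one_general {N : ℕ}
    (Ω : Set (EuclideanSpace ℝ (Fin N)))
    (s : ℝ) (A a : ℝ → ℝ)
    (hAa : IsNFunctionDeriv A a)
    (hbdd : BddAbove (ratioSet A a))
    (u : EuclideanSpace ℝ (Fin N) → ℝ)
    (hgt : 1 < gaglSeminorm A s Ω u) :
    ENNReal.ofReal (gaglSeminorm A s Ω u ^ sInf (ratioSet A a)) ≤ gaglModular A s Ω u ∧
      gaglModular A s Ω u ≤
        ENNReal.ofReal (gaglSeminorm A s Ω u ^ sSup (ratioSet A a)) :=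
  ⟨ofReal_rpow_gaglSeminorm_le hAa (fun _ ht => hAa.sInf_ratioSet_mul_le ht) hgt,
    gaglModular_le_ofReal_rpow_gaglSeminorm hAa (fun _ ht => hAa.mul_le_sSup_ratioSet_mul hbdd ht)
      hAa.sSup_ratioSet_nonneg hgt⟩

/-- if `[u]_{s,A} > 1` then `[u]^{p₀} ≤ φ(u) ≤ [u]^{p⁰}`. -/
theorem modular_bounds_of_seminorm_gt_one {N : ℕ} (hN : 0 < N)
    (Ω : Set (EuclideanSpace ℝ (Fin N))) (hΩ : IsOpen Ω)
    (s : ℝ) (hs : s ∈ Set.Ioo (0:ℝ) 1) (A a : ℝ → ℝ)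
    (hAa : IsNFunctionDeriv A a)
    (hp0 : 1 < sInf (ratioSet A a)) (hbdd : BddAbove (ratioSet A a))
    (u : EuclideanSpace ℝ (Fin N) → ℝ) (hu : MemWsLA A s Ω u)
    (hgt : 1 < gaglSeminorm A s Ω u) :
    ENNReal.ofReal (gaglSeminorm A s Ω u ^ sInf (ratioSet A a)) ≤ gaglModular A s Ω u ∧
      gaglModular A s Ω u ≤
        ENNReal.ofReal (gaglSeminorm A s Ω u ^ sSup (ratioSet A a)) :=
  modular_bounds_of_seminorm_gt_one_general Ω s A a hAa hbdd u hgt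

end
end
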